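/- arXiv:1211.0589 — 3 statements merged into one kernel-verified Lean document; each statement's English description precedes it below -/
import Mathlib

section
/- For every unweighted, connected, d-regular graph G, every vertex x, and every integer r with 1 ≤ r ≤ diam(x) (where diam(x) is the maximum distance from x to any vertex), the number of vertices within distance r of x satisfies |B(x,r)| ≥ (d+1)·r/3; hence vol(x,r) = d·|B(x,r)| ≥ d²·r/3. -/
/-!
Walk along a geodesic from `x` to a vertex at distance at least `r` and stop at the vertices at
distances `0, 3, 6, …` below `r`. There are `⌈r / 3⌉` of them, any two are at distance at
least `3`, so their closed neighbourhoods are pairwise disjoint; each has `d + 1` vertices and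
lies in the ball of radius `r`.
-/

open Finset

namespace SimpleGraph

variable {V : Type*} {G : SimpleGraph V} {u v : V}

theorem Walk.dist_getVert_of_length_eq_dist (p : G.Walk u v) (hp : p.length = G.dist u v)
    {n : ℕ} (hn : n ≤ p.length) : G.dist u (p.getVert n) = n := by
  rw [← length_eq_dist_of_subwalk hp (p.isSubwalk_take n), Walk.take_length]
  omega

theorem exists_adj_dist_eq_of_dist_eq_succ {n : ℕ} (h : G.dist u v = n + 1) :
    ∃ w, G.dist u w = n ∧ G.Adj w v := by
  obtain ⟨p, hp⟩ := exists_walk_of_dist_ne_zero (by omega : G.dist u v ≠ 0)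
  refine ⟨p.getVert n, p.dist_getVert_of_length_eq_dist hp (by omega), ?_⟩
  have hadj := p.adj_getVert_succ (i := n) (by omega)
  rwa [show n + 1 = p.length by omega, Walk.getVert_length] at hadj

theorem Connected.finite_setOf_dist_le [G.LocallyFinite] (hconn : G.Connected) (u : V) (r : ℕ) :
    {v | G.dist u v ≤ r}.Finite := by
  induction r with
  | zero =>
    refine (Set.finite_singleton u).subset fun v hv => ?_
    exact (hconn.dist_eq_zero_iff.mp (Nat.le_zero.mp hv)).symm
  | succ r ih =>
    refine (ih.union (ih.biUnion fun w _ => (G.neighborSet w).toFinite)).subset fun v hv => ?_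
    rcases Nat.lt_or_eq_of_le (hv : G.dist u v ≤ r + 1) with hlt | heq
    · exact Or.inl (Nat.le_of_lt_succ hlt)
    · obtain ⟨w, hw, hadj⟩ := exists_adj_dist_eq_of_dist_eq_succ heq
      exact Or.inr (Set.mem_biUnion (le_of_eq hw) hadj)

section closedNeighborFinset

variable (G) [G.LocallyFinite] [DecidableEq V]

def closedNeighborFinset (v : V) : Finset V := insert v (G.neighborFinset v)

variable {G}

theorem card_closedNeighborFinset {d : ℕ} (hreg : G.IsRegularOfDegree d) (v : V) :
    #(G.closedNeighborFinset v) = d + 1 := by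
  rw [closedNeighborFinset, card_insert_of_notMem (by simp), card_neighborFinset_eq_degree,
    hreg v]

theorem dist_le_one_of_mem_closedNeighborFinset {v w : V} (hw : w ∈ G.closedNeighborFinset v) :
    G.dist v w ≤ 1 := by
  rcases mem_insert.mp hw with rfl | hadj
  · simp
  · exact (dist_eq_one_iff_adj.mpr ((G.mem_neighborFinset v w).mp hadj)).le

theorem Connected.disjoint_closedNeighborFinset (hconn : G.Connected) {v w : V}
    (h : 3 ≤ G.dist v w) : Disjoint (G.closedNeighborFinset v) (G.closedNeighborFinset w) := by
  refine Finset.disjoint_left.mpr fun a hv hw => ?_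
  have hva := dist_le_one_of_mem_closedNeighborFinset hv
  have hwa := dist_le_one_of_mem_closedNeighborFinset hw
  have := hconn.dist_triangle (u := v) (v := a) (w := w)
  rw [dist_comm (u := a)] at this
  omega

theorem Connected.card_mul_le_ncard_setOf_dist_le (hconn : G.Connected) {d : ℕ}
    (hreg : G.IsRegularOfDegree d) {u : V} {r : ℕ} {s : Finset V}
    (hs : (s : Set V).Pairwise fun v w => 3 ≤ G.dist v w) (hsr : ∀ v ∈ s, G.dist u v + 1 ≤ r) :
    #s * (d + 1) ≤ {v | G.dist u v ≤ r}.ncard := by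
  have hcard : #(s.biUnion G.closedNeighborFinset) = #s * (d + 1) := by
    rw [card_biUnion fun v hv w hw hvw => hconn.disjoint_closedNeighborFinset (hs hv hw hvw)]
    simp [card_closedNeighborFinset hreg]
  rw [← hcard, ← Set.ncard_coe_finset]
  refine Set.ncard_le_ncard (fun a ha => ?_) (hconn.finite_setOf_dist_le u r)
  obtain ⟨v, hv, hav⟩ := mem_biUnion.mp (mem_coe.mp ha)
  have := hconn.dist_triangle (u := u) (v := v) (w := a)
  have := dist_le_one_of_mem_closedNeighborFinset hav
  have := hsr v hv
  show G.dist u a ≤ r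
  omega

end closedNeighborFinset

theorem Connected.exists_finset_pairwise_three_le_dist (hconn : G.Connected) {u v : V} {r : ℕ}
    (hr : r ≤ G.dist u v) : ∃ s : Finset V, #s = (r + 2) / 3 ∧
      (s : Set V).Pairwise (fun a b => 3 ≤ G.dist a b) ∧ ∀ a ∈ s, G.dist u a + 1 ≤ r := by
  classical
  obtain ⟨p, hp⟩ := hconn.exists_walk_length_eq_dist u v
  have hdist : ∀ j ∈ range ((r + 2) / 3), G.dist u (p.getVert (3 * j)) = 3 * j := by
    intro j hj
    exact p.dist_getVert_of_length_eq_dist hp (by rw [mem_range] at hj; omega)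
  have hinj : Set.InjOn (fun j => p.getVert (3 * j)) (range ((r + 2) / 3)) := by
    intro i hi j hj hij
    have := congrArg (G.dist u) hij
    simp only [hdist i hi, hdist j hj] at this
    omega
  refine ⟨(range ((r + 2) / 3)).image fun j => p.getVert (3 * j),
    by rw [card_image_of_injOn hinj, card_range], ?_, ?_⟩
  · simp only [coe_image, coe_range]
    rintro _ ⟨i, hi, rfl⟩ _ ⟨j, hj, rfl⟩ hne
    have hi' := hdist i (mem_range.mpr hi)
    have hj' := hdist j (mem_range.mpr hj)
    have := hconn.dist_triangle (u := u) (v := p.getVert (3 * i)) (w := p.getVert (3 * j))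
    have := hconn.dist_triangle (u := u) (v := p.getVert (3 * j)) (w := p.getVert (3 * i))
    rw [dist_comm (u := p.getVert (3 * j))] at this
    have : i ≠ j := fun h => hne (h ▸ rfl)
    show 3 ≤ G.dist (p.getVert (3 * i)) (p.getVert (3 * j))
    omega
  · simp only [mem_image]
    rintro a ⟨j, hj, rfl⟩
    rw [hdist j hj]
    rw [mem_range] at hj
    omega

end SimpleGraph

theorem stmt2_general {V : Type*} (G : SimpleGraph V) [hlf : G.LocallyFinite]
    (d : ℕ) (hreg : G.IsRegularOfDegree d) (hconn : G.Connected)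
    (x : V) (r : ℕ) (hr2 : ∃ y, r ≤ G.dist x y) :
    (d + 1) * r ≤ 3 * {y : V | G.dist x y ≤ r}.ncard ∧
      d ^ 2 * r ≤ 3 * (d * {y : V | G.dist x y ≤ r}.ncard) := by
  classical
  obtain ⟨y, hy⟩ := hr2
  obtain ⟨s, hcard, hs, hsr⟩ := hconn.exists_finset_pairwise_three_le_dist hy
  have hle := hconn.card_mul_le_ncard_setOf_dist_le hreg hs hsr
  rw [hcard] at hle
  have hr : r ≤ 3 * ((r + 2) / 3) := by omega
  constructor
  · nlinarith
  · nlinarith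

/-- For a connected `d`-regular unweighted graph, for `1 ≤ r ≤ diam(x)`, the ball of radius
`r` around `x` has at least `(d+1)·r/3` vertices, hence volume at least `d²·r/3`. -/
theorem stmt2 {V : Type*} (G : SimpleGraph V) [hlf : G.LocallyFinite]
    (d : ℕ) (hreg : G.IsRegularOfDegree d) (hconn : G.Connected)
    (x : V) (r : ℕ) (hr1 : 1 ≤ r) (hr2 : ∃ y, r ≤ G.dist x y) :
    (d + 1) * r ≤ 3 * {y : V | G.dist x y ≤ r}.ncard ∧
      d ^ 2 * r ≤ 3 * (d * {y : V | G.dist x y ≤ r}.ncard) :=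
  stmt2_general G (hlf := hlf) d hreg hconn x r hr2
end

section
/- For every unweighted connected d-regular graph G on n vertices (finite), the diameter of G is at most 3n/d. -/
/-- Distance from the start of a walk to its `k`-th vertex is at most `k`. -/
lemma aux_dist_getVert_le {V : Type*} {G : SimpleGraph V} (hconn : G.Connected) :
    ∀ {u v : V} (p : G.Walk u v) (k : ℕ), G.dist u (p.getVert k) ≤ k := by
  intro u v p
  induction p with
  | nil => intro k; simp [SimpleGraph.Walk.getVert, SimpleGraph.dist_self]
  | @cons u w v h q ih =>
    intro k
    cases k with
    | zero => simp [SimpleGraph.Walk.getVert, SimpleGraph.dist_self]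
    | succ k =>
      have h1 : G.dist u ((SimpleGraph.Walk.cons h q).getVert (k + 1)) =
          G.dist u (q.getVert k) := rfl
      rw [h1]
      calc G.dist u (q.getVert k) ≤ G.dist u w + G.dist w (q.getVert k) :=
            hconn.dist_triangle
        _ ≤ 1 + k := Nat.add_le_add (SimpleGraph.dist_eq_one_iff_adj.mpr h).le (ih k)
        _ = k + 1 := by omega

/-- Distance from the `k`-th vertex of a walk to its end is at most `length - k`. -/
lemma aux_dist_getVert_to_end {V : Type*} {G : SimpleGraph V} :
    ∀ {u v : V} (p : G.Walk u v) (k : ℕ), G.dist (p.getVert k) v ≤ p.length - k := by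
  intro u v p
  induction p with
  | nil => intro k; simp [SimpleGraph.Walk.getVert]
  | @cons u w v h q ih =>
    intro k
    cases k with
    | zero =>
      simpa [SimpleGraph.Walk.getVert] using SimpleGraph.dist_le (SimpleGraph.Walk.cons h q)
    | succ k =>
      have h1 : (SimpleGraph.Walk.cons h q).getVert (k + 1) = q.getVert k := rfl
      rw [h1]
      calc G.dist (q.getVert k) v ≤ q.length - k := ih k
        _ ≤ (SimpleGraph.Walk.cons h q).length - (k + 1) := by
            simp only [SimpleGraph.Walk.length_cons]; omega

/-- Every finite connected `d`-regular unweighted graph on `n` vertices has diameter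
at most `3n/d`. -/
theorem stmt3 {V : Type*} [Fintype V] (G : SimpleGraph V) [DecidableRel G.Adj]
    (d : ℕ) (hreg : G.IsRegularOfDegree d) (hconn : G.Connected) :
    ∀ x y : V, (d : ℝ) * G.dist x y ≤ 3 * Fintype.card V := by
  classical
  intro x y
  obtain ⟨p, hp⟩ := hconn.exists_walk_length_eq_dist x y
  set L := G.dist x y with hL
  -- the key lower bound on distances along the geodesic
  have key : ∀ k : ℕ, k ≤ L → k ≤ G.dist x (p.getVert k) := by
    intro k hk
    have h1 : L ≤ G.dist x (p.getVert k) + G.dist (p.getVert k) y := hconn.dist_triangle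
    have h2 : G.dist (p.getVert k) y ≤ L - k := by
      have := aux_dist_getVert_to_end p k
      rwa [hp] at this
    omega
  set a := L / 3 with ha
  -- the family of closed neighbourhoods of every third vertex on the geodesic
  set f : ℕ → Finset V := fun i =>
    insert (p.getVert (3 * i)) (G.neighborFinset (p.getVert (3 * i))) with hf
  have hcard : ∀ i, (f i).card = d + 1 := by
    intro i
    rw [hf]
    rw [Finset.card_insert_of_notMem (by simp), SimpleGraph.card_neighborFinset_eq_degree, hreg]
  have hdistle : ∀ (v : V) (z : V), z ∈ insert v (G.neighborFinset v) → G.dist v z ≤ 1 := by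
    intro v z hz
    rcases Finset.mem_insert.mp hz with h | h
    · subst h; simp [SimpleGraph.dist_self]
    · exact (SimpleGraph.dist_eq_one_iff_adj.mpr (by simpa using h)).le
  have hdisj : ∀ i ∈ Finset.range (a + 1), ∀ j ∈ Finset.range (a + 1), i ≠ j →
      Disjoint (f i) (f j) := by
    have main : ∀ i j : ℕ, i < j → j ≤ a → Disjoint (f i) (f j) := by
      intro i j hij hja
      rw [Finset.disjoint_left]
      intro z hzi hzj
      have h3i : 3 * i ≤ L := by omega
      have h3j : 3 * j ≤ L := by omega
      have hdi : G.dist (p.getVert (3 * i)) z ≤ 1 := hdistle _ _ hzi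
      have hdj : G.dist (p.getVert (3 * j)) z ≤ 1 := hdistle _ _ hzj
      have hlow : 3 * j ≤ G.dist x (p.getVert (3 * j)) := key _ h3j
      have hup : G.dist x (p.getVert (3 * i)) ≤ 3 * i := by
        have := aux_dist_getVert_le hconn p (3 * i)
        omega
      have htri : G.dist x (p.getVert (3 * j)) ≤
          G.dist x (p.getVert (3 * i)) + G.dist (p.getVert (3 * i)) (p.getVert (3 * j)) :=
        hconn.dist_triangle
      have htri2 : G.dist (p.getVert (3 * i)) (p.getVert (3 * j)) ≤
          G.dist (p.getVert (3 * i)) z + G.dist z (p.getVert (3 * j)) := hconn.dist_triangle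
      rw [SimpleGraph.dist_comm] at hdj
      omega
    intro i hi j hj hij
    rcases lt_or_gt_of_ne hij with h | h
    · exact main i j h (by simpa using Nat.lt_succ_iff.mp (Finset.mem_range.mp hj))
    · exact (main j i h (by simpa using Nat.lt_succ_iff.mp (Finset.mem_range.mp hi))).symm
  -- counting
  have hcount : (a + 1) * (d + 1) ≤ Fintype.card V := by
    have hbu : ((Finset.range (a + 1)).biUnion f).card =
        ∑ i ∈ Finset.range (a + 1), (f i).card := Finset.card_biUnion hdisj
    have hle : ((Finset.range (a + 1)).biUnion f).card ≤ Fintype.card V :=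
      Finset.card_le_univ _
    rw [hbu] at hle
    have : ∑ i ∈ Finset.range (a + 1), (f i).card = (a + 1) * (d + 1) := by
      rw [Finset.sum_congr rfl fun i _ => hcard i]
      simp [Finset.sum_const, mul_comm]
    omega
  -- final arithmetic
  have hnat : d * L ≤ 3 * Fintype.card V := by
    have hL3 : L ≤ 3 * (a + 1) := by omega
    calc d * L ≤ (d + 1) * (3 * (a + 1)) :=
          Nat.mul_le_mul (Nat.le_succ d) hL3
      _ = 3 * ((a + 1) * (d + 1)) := by ring
      _ ≤ 3 * Fintype.card V := Nat.mul_le_mul_left 3 hcount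
  calc (d : ℝ) * (L : ℝ) = ((d * L : ℕ) : ℝ) := by push_cast; ring
    _ ≤ ((3 * Fintype.card V : ℕ) : ℝ) := Nat.cast_le.mpr hnat
    _ = 3 * Fintype.card V := by push_cast; ring
end

section
/- For every finite connected weighted graph G, the second smallest eigenvalue λ₂ of the normalized Laplacian L = I − D^{−1/2} A D^{−1/2} satisfies λ₂ ≥ 2/(vol(V)·R_diam), where R_diam is the maximum effective resistance between pairs of vertices and vol(V) = ∑_x w(x). -/
/-!
Take unit eigenvectors `u, v` of the normalized Laplacian for `λ₁ ≤ λ₂`. Some unit combination `w`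
of them is orthogonal to `D^{1/2} 𝟙` and has Rayleigh quotient `⟪w, L w⟫ ≤ λ₂`. The function
`f = D^{-1/2} w` then has `∑ d f = 0`, `∑ d f² = 1` and Dirichlet energy `⟪w, L w⟫`. If `f` is
maximal at `a` and minimal at `b`, the mean-zero condition gives `1 ≤ vol · (f a - f b)² / 4`,
while `f` is a competitor in the variational definition of `C_eff(a, b)`, so
`C_eff(a, b) · (f a - f b)² ≤ λ₂`. Hence `4 ≤ vol · R_eff(a, b) · λ₂ ≤ vol · R_diam · λ₂`.
-/

/-- Energy of `f` on the weighted graph with weight matrix `W` (sum over unordered pairs). -/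
noncomputable def energyW {n : ℕ} (W : Matrix (Fin n) (Fin n) ℝ) (f : Fin n → ℝ) : ℝ :=
  (∑ x, ∑ y, W x y * (f x - f y) ^ 2) / 2

/-- Effective conductance between `s` and `t`. -/
noncomputable def Ceff {n : ℕ} (W : Matrix (Fin n) (Fin n) ℝ) (s t : Fin n) : ℝ :=
  sInf {q | ∃ f : Fin n → ℝ, f s ≠ f t ∧ q = energyW W f / (f s - f t) ^ 2}

/-- Effective resistance between `s` and `t`. -/
noncomputable def Reff {n : ℕ} (W : Matrix (Fin n) (Fin n) ℝ) (s t : Fin n) : ℝ :=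
  (Ceff W s t)⁻¹

/-- The normalized Laplacian `I - D^{-1/2} A D^{-1/2}` of the weighted graph `W`. -/
noncomputable def normLap {n : ℕ} (W : Matrix (Fin n) (Fin n) ℝ) :
    Matrix (Fin n) (Fin n) ℝ :=
  Matrix.of fun x y =>
    (if x = y then (1 : ℝ) else 0) -
      W x y / (Real.sqrt (∑ z, W x z) * Real.sqrt (∑ z, W y z))

open Matrix Finset

lemma exists_unit_orthogonal_dotProduct_mulVec_le {ι : Type*} [Fintype ι] {A : Matrix ι ι ℝ}
    {u v : ι → ℝ} {μ ν : ℝ} (hu : A *ᵥ u = μ • u) (hv : A *ᵥ v = ν • v) (huu : u ⬝ᵥ u = 1)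
    (hvv : v ⬝ᵥ v = 1) (huv : u ⬝ᵥ v = 0) (hμν : μ ≤ ν) (s : ι → ℝ) :
    ∃ w, w ⬝ᵥ w = 1 ∧ s ⬝ᵥ w = 0 ∧ w ⬝ᵥ (A *ᵥ w) ≤ ν := by
  set a := s ⬝ᵥ u
  set b := s ⬝ᵥ v
  have hvu : v ⬝ᵥ u = 0 := by rw [dotProduct_comm, huv]
  by_cases hab : a = 0 ∧ b = 0
  · refine ⟨u, huu, hab.1, ?_⟩
    rwa [hu, dotProduct_smul, huu, smul_eq_mul, mul_one]
  set N := √(a ^ 2 + b ^ 2)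
  have hN : 0 < a ^ 2 + b ^ 2 := by
    rcases not_and_or.1 hab with h | h <;> positivity
  have hN2 : N ^ 2 = a ^ 2 + b ^ 2 := Real.sq_sqrt hN.le
  have hN0 : N ≠ 0 := (Real.sqrt_pos.2 hN).ne'
  refine ⟨(b / N) • u - (a / N) • v, ?_, ?_, ?_⟩
  · simp only [dotProduct_sub, sub_dotProduct, dotProduct_smul, smul_dotProduct, huu, hvv, huv,
      hvu, smul_eq_mul]
    field_simp
    linarith
  · simp only [dotProduct_sub, dotProduct_smul, smul_eq_mul]
    ring
  · simp only [mulVec_sub, mulVec_smul, hu, hv, dotProduct_sub, sub_dotProduct, dotProduct_smul,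
      smul_dotProduct, huu, hvv, huv, hvu, smul_eq_mul, mul_zero, sub_zero, zero_sub, mul_one]
    have key : ν - (b / N * (b / N * μ) - a / N * -(a / N * ν)) = (ν - μ) * b ^ 2 / N ^ 2 := by
      field_simp
      rw [hN2]
      ring
    linarith [key ▸ div_nonneg (mul_nonneg (sub_nonneg.2 hμν) (sq_nonneg b)) (sq_nonneg N)]

lemma Matrix.IsHermitian.dotProduct_eigenvectorBasis {ι : Type*} [Fintype ι] [DecidableEq ι]
    {A : Matrix ι ι ℝ} (hA : A.IsHermitian) (i j : ι) :
    ⇑(hA.eigenvectorBasis i) ⬝ᵥ ⇑(hA.eigenvectorBasis j) = if i = j then 1 else 0 := by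
  rw [← orthonormal_iff_ite.1 hA.eigenvectorBasis.orthonormal i j,
    EuclideanSpace.inner_eq_star_dotProduct, star_trivial, dotProduct_comm]

lemma sum_mul_sq_le_of_sum_mul_eq_zero {ι : Type*} [Fintype ι] {m f : ι → ℝ} {lo hi : ℝ}
    (hm : ∀ i, 0 ≤ m i) (hmean : ∑ i, m i * f i = 0) (hlo : ∀ i, lo ≤ f i) (hhi : ∀ i, f i ≤ hi) :
    ∑ i, m i * f i ^ 2 ≤ (∑ i, m i) * (hi - lo) ^ 2 / 4 := by
  set c := (lo + hi) / 2 with hc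
  have hshift : ∑ i, m i * (f i - c) ^ 2 = ∑ i, m i * f i ^ 2 + c ^ 2 * ∑ i, m i := by
    have : ∑ i, m i * (f i - c) ^ 2
        = ∑ i, m i * f i ^ 2 - 2 * c * ∑ i, m i * f i + c ^ 2 * ∑ i, m i := by
      simp only [mul_sum, ← sum_sub_distrib, ← sum_add_distrib]
      exact sum_congr rfl fun i _ => by ring
    rw [this, hmean]
    ring
  calc ∑ i, m i * f i ^ 2 ≤ ∑ i, m i * (f i - c) ^ 2 := by
        rw [hshift]
        nlinarith [sum_nonneg fun i (_ : i ∈ univ) => hm i]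
    _ ≤ ∑ i, m i * ((hi - lo) / 2) ^ 2 := by
        refine sum_le_sum fun i _ => mul_le_mul_of_nonneg_left ?_ (hm i)
        exact sq_le_sq' (by linarith [hlo i, hhi i]) (by linarith [hlo i, hhi i])
    _ = (∑ i, m i) * (hi - lo) ^ 2 / 4 := by
        rw [← sum_mul]
        ring

lemma SimpleGraph.Walk.abs_sub_le_length_mul {V : Type*} {G : SimpleGraph V} {g : V → ℝ} {B : ℝ}
    (hadj : ∀ x y, G.Adj x y → |g x - g y| ≤ B) {a b : V} (p : G.Walk a b) :
    |g a - g b| ≤ p.length * B := by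
  induction p with
  | nil => simp
  | @cons u m b h p ih =>
    calc |g u - g b| ≤ |g u - g m| + |g m - g b| := abs_sub_le _ _ _
      _ ≤ B + p.length * B := add_le_add (hadj _ _ h) ih
      _ = (p.length + 1 : ℕ) * B := by push_cast; ring

lemma exists_pos_le_of_ne_zero {ι : Type*} [Fintype ι] {h : ι → ℝ} (hnn : ∀ i, 0 ≤ h i) :
    ∃ c > 0, ∀ i, h i ≠ 0 → c ≤ h i := by
  classical
  by_cases hex : ∃ i, h i ≠ 0
  · obtain ⟨j, hj, hmin⟩ := (univ.filter fun i => h i ≠ 0).exists_min_image h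
      (by simpa [Finset.Nonempty] using hex)
    exact ⟨h j, (hnn j).lt_of_ne' (mem_filter.1 hj).2,
      fun i hi => hmin i (mem_filter.2 ⟨mem_univ i, hi⟩)⟩
  · push Not at hex
    exact ⟨1, one_pos, fun i hi => absurd (hex i) hi⟩

section Graph

variable {n : ℕ} {W : Matrix (Fin n) (Fin n) ℝ}

lemma energyW_nonneg (hnn : ∀ x y, 0 ≤ W x y)
    (f : Fin n → ℝ) : 0 ≤ energyW W f :=
  div_nonneg (sum_nonneg fun x _ => sum_nonneg fun y _ => mul_nonneg (hnn x y) (sq_nonneg _))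
    zero_le_two

lemma energyW_eq (hsym : ∀ x y, W x y = W y x)
    (f : Fin n → ℝ) :
    energyW W f = ∑ x, (∑ y, W x y) * f x ^ 2 - ∑ x, ∑ y, W x y * (f x * f y) := by
  have hswap : ∑ x, ∑ y, W x y * f y ^ 2 = ∑ x, ∑ y, W x y * f x ^ 2 := by
    rw [sum_comm]; simp only [hsym]
  have hexpand : ∑ x, ∑ y, W x y * (f x - f y) ^ 2 = ∑ x, ∑ y, W x y * f x ^ 2
      + ∑ x, ∑ y, W x y * f y ^ 2 - 2 * ∑ x, ∑ y, W x y * (f x * f y) := by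
    simp only [mul_sum, ← sum_add_distrib, ← sum_sub_distrib]
    exact sum_congr rfl fun x _ => sum_congr rfl fun y _ => by ring
  rw [energyW, hexpand, hswap]
  simp only [sum_mul]
  ring

lemma dotProduct_normLap_mulVec (hsym : ∀ x y, W x y = W y x) (hd : ∀ x, 0 < ∑ z, W x z)
    (v : Fin n → ℝ) :
    v ⬝ᵥ (normLap W *ᵥ v) = energyW W (fun x => v x / √(∑ z, W x z)) := by
  rw [energyW_eq hsym]
  simp only [dotProduct, mulVec, normLap, of_apply, sub_mul, sum_sub_distrib, ite_mul, one_mul,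
    zero_mul, sum_ite_eq, mem_univ, if_true, mul_sub, mul_sum]
  congr 1
  · refine sum_congr rfl fun x _ => ?_
    rw [div_pow, Real.sq_sqrt (hd x).le, mul_div_cancel₀ _ (hd x).ne']
    ring
  · refine sum_congr rfl fun x _ => sum_congr rfl fun y _ => ?_
    field_simp

lemma sum_pos_of_connected (hn : 2 ≤ n) (hsym : ∀ x y, W x y = W y x) (hnn : ∀ x y, 0 ≤ W x y)
    (hconn : (SimpleGraph.fromRel fun x y => W x y ≠ 0).Connected) (x : Fin n) :
    0 < ∑ z, W x z := by
  have : Nontrivial (Fin n) := Fin.nontrivial_iff_two_le.2 hn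
  obtain ⟨y, hxy⟩ := hconn.preconnected.exists_adj_of_nontrivial x
  have hW : W x y ≠ 0 := by
    rcases ((SimpleGraph.fromRel_adj _ _ _).1 hxy).2 with h | h
    · exact h
    · rwa [hsym]
  exact ((hnn x y).lt_of_ne' hW).trans_le (single_le_sum (fun z _ => hnn x z) (mem_univ y))

lemma mul_sq_sub_le_two_mul_energyW (hnn : ∀ x y, 0 ≤ W x y) (f : Fin n → ℝ) (x y : Fin n) :
    W x y * (f x - f y) ^ 2 ≤ 2 * energyW W f := by
  have hterm : ∀ x y, 0 ≤ W x y * (f x - f y) ^ 2 := fun x y => mul_nonneg (hnn x y) (sq_nonneg _)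
  rw [energyW, mul_div_cancel₀ _ two_ne_zero]
  exact (single_le_sum (fun y _ => hterm x y) (mem_univ y)).trans
    (single_le_sum (fun x _ => sum_nonneg fun y _ => hterm x y) (mem_univ x))

lemma exists_pos_mul_sq_sub_le_energyW (hnn : ∀ x y, 0 ≤ W x y)
    (hconn : (SimpleGraph.fromRel fun x y => W x y ≠ 0).Connected) (a b : Fin n) :
    ∃ ε > 0, ∀ f : Fin n → ℝ, ε * (f a - f b) ^ 2 ≤ energyW W f := by
  obtain ⟨c, hc, hcW⟩ := exists_pos_le_of_ne_zero (h := fun p : Fin n × Fin n => W p.1 p.2)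
    fun p => hnn p.1 p.2
  obtain ⟨p⟩ := hconn.preconnected a b
  refine ⟨c / (2 * (p.length + 1) ^ 2), by positivity, fun f => ?_⟩
  set B := √(2 * energyW W f / c)
  have hedge : ∀ x y, (SimpleGraph.fromRel fun x y => W x y ≠ 0).Adj x y → |f x - f y| ≤ B := by
    intro x y hxy
    rw [← Real.sqrt_sq_eq_abs]
    refine Real.sqrt_le_sqrt ((le_div_iff₀' hc).2 ?_)
    rcases ((SimpleGraph.fromRel_adj _ _ _).1 hxy).2 with h | h
    · exact (mul_le_mul_of_nonneg_right (hcW (x, y) h) (sq_nonneg _)).trans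
        (mul_sq_sub_le_two_mul_energyW hnn f x y)
    · rw [← neg_sub, neg_sq]
      exact (mul_le_mul_of_nonneg_right (hcW (y, x) h) (sq_nonneg _)).trans
        (mul_sq_sub_le_two_mul_energyW hnn f y x)
  have hwalk := p.abs_sub_le_length_mul hedge
  have hB : B ^ 2 = 2 * energyW W f / c := Real.sq_sqrt (by positivity [energyW_nonneg hnn f])
  have hsq : (f a - f b) ^ 2 ≤ (p.length + 1) ^ 2 * (2 * energyW W f / c) := by
    calc (f a - f b) ^ 2 = |f a - f b| ^ 2 := (sq_abs _).symm
      _ ≤ (p.length * B) ^ 2 := pow_le_pow_left₀ (abs_nonneg _) hwalk 2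
      _ ≤ (p.length + 1) ^ 2 * B ^ 2 := by
        rw [mul_pow]
        gcongr
        linarith
      _ = (p.length + 1) ^ 2 * (2 * energyW W f / c) := by rw [hB]
  rw [div_mul_eq_mul_div, div_le_iff₀ (by positivity)]
  calc c * (f a - f b) ^ 2 ≤ c * ((p.length + 1) ^ 2 * (2 * energyW W f / c)) :=
        mul_le_mul_of_nonneg_left hsq hc.le
    _ = energyW W f * (2 * (p.length + 1) ^ 2) := by
        field_simp

lemma Ceff_le_energyW_div (hnn : ∀ x y, 0 ≤ W x y) {f : Fin n → ℝ} {a b : Fin n}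
    (hf : f a ≠ f b) : Ceff W a b ≤ energyW W f / (f a - f b) ^ 2 := by
  refine csInf_le ⟨0, ?_⟩ ⟨f, hf, rfl⟩
  rintro q ⟨g, -, rfl⟩
  exact div_nonneg (energyW_nonneg hnn g) (sq_nonneg _)

lemma Ceff_pos (hnn : ∀ x y, 0 ≤ W x y)
    (hconn : (SimpleGraph.fromRel fun x y => W x y ≠ 0).Connected) {a b : Fin n} (hab : a ≠ b) :
    0 < Ceff W a b := by
  classical
  obtain ⟨ε, hε, hεf⟩ := exists_pos_mul_sq_sub_le_energyW hnn hconn a b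
  refine hε.trans_le (le_csInf ⟨_, Pi.single a 1, by simp [hab.symm], rfl⟩ ?_)
  rintro q ⟨f, hf, rfl⟩
  exact (le_div_iff₀ (by positivity [sub_ne_zero.2 hf])).2 (hεf f)

lemma Reff_le_sSup (a b : Fin n) : Reff W a b ≤ sSup {r | ∃ s t : Fin n, r = Reff W s t} := by
  refine le_csSup (Set.Finite.bddAbove ?_) ⟨a, b, rfl⟩
  refine (Set.finite_range fun p : Fin n × Fin n => Reff W p.1 p.2).subset ?_
  rintro r ⟨s, t, rfl⟩
  exact ⟨(s, t), rfl⟩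

lemma four_le_mul_sSup_Reff_mul_energyW (hnn : ∀ x y, 0 ≤ W x y)
    (hconn : (SimpleGraph.fromRel fun x y => W x y ≠ 0).Connected) {f : Fin n → ℝ}
    (hmean : ∑ x, (∑ z, W x z) * f x = 0) (hnorm : ∑ x, (∑ z, W x z) * f x ^ 2 = 1) :
    4 ≤ (∑ x, ∑ y, W x y) * sSup {r | ∃ s t : Fin n, r = Reff W s t} * energyW W f := by
  have := hconn.nonempty
  obtain ⟨a, ha⟩ := Finite.exists_max f
  obtain ⟨b, hb⟩ := Finite.exists_min f
  have hvar := sum_mul_sq_le_of_sum_mul_eq_zero (fun x => sum_nonneg fun z _ => hnn x z) hmean hb ha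
  rw [hnorm] at hvar
  have hf : f a ≠ f b := by
    intro h
    rw [h, sub_self] at hvar
    norm_num at hvar
  have hq : 0 < (f a - f b) ^ 2 := by positivity [sub_ne_zero.2 hf]
  have hC : Ceff W a b * (f a - f b) ^ 2 ≤ energyW W f :=
    (le_div_iff₀ hq).1 (Ceff_le_energyW_div hnn hf)
  have hCpos := Ceff_pos hnn hconn fun h => hf (congrArg f h)
  set R := sSup {r | ∃ s t : Fin n, r = Reff W s t}
  have hCR : 1 ≤ Ceff W a b * R := by
    calc 1 = Ceff W a b * (Ceff W a b)⁻¹ := (mul_inv_cancel₀ hCpos.ne').symm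
      _ ≤ Ceff W a b * R := mul_le_mul_of_nonneg_left (Reff_le_sSup a b) hCpos.le
  have hR : 0 ≤ R := (inv_pos.2 hCpos).le.trans (Reff_le_sSup a b)
  have hvol : 0 ≤ ∑ x, ∑ y, W x y := sum_nonneg fun x _ => sum_nonneg fun y _ => hnn x y
  calc (4 : ℝ) ≤ ((∑ x, ∑ y, W x y) * (f a - f b) ^ 2) * (Ceff W a b * R) := by nlinarith
    _ = (∑ x, ∑ y, W x y) * R * (Ceff W a b * (f a - f b) ^ 2) := by ring
    _ ≤ (∑ x, ∑ y, W x y) * R * energyW W f := by gcongr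

end Graph

/-- For every finite connected weighted graph, `λ₂ ≥ 2 / (vol(V) · R_diam)`. -/
theorem stmt4 {n : ℕ} (hn : 2 ≤ n) (W : Matrix (Fin n) (Fin n) ℝ)
    (hsym : ∀ x y, W x y = W y x) (hnn : ∀ x y, 0 ≤ W x y)
    (hconn : (SimpleGraph.fromRel fun x y => W x y ≠ 0).Connected)
    (hL : (normLap W).IsHermitian)
    (lam : Fin n → ℝ) (hmono : Monotone lam)
    (hperm : ∃ σ : Equiv.Perm (Fin n), lam = hL.eigenvalues ∘ σ) :
    2 / ((∑ x, ∑ y, W x y) * sSup {r | ∃ s t : Fin n, r = Reff W s t})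
      ≤ lam ⟨1, by omega⟩ := by
  obtain ⟨σ, rfl⟩ := hperm
  set i₀ : Fin n := ⟨0, by omega⟩
  set i₁ : Fin n := ⟨1, by omega⟩
  have hd := sum_pos_of_connected hn hsym hnn hconn
  have h01 : σ i₀ ≠ σ i₁ := σ.injective.ne (by simp [i₀, i₁, Fin.ext_iff])
  obtain ⟨w, hww, hsw, hwLw⟩ := exists_unit_orthogonal_dotProduct_mulVec_le
    (hL.mulVec_eigenvectorBasis (σ i₀)) (hL.mulVec_eigenvectorBasis (σ i₁))
    (by simp [hL.dotProduct_eigenvectorBasis]) (by simp [hL.dotProduct_eigenvectorBasis])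
    (by simp [hL.dotProduct_eigenvectorBasis, h01]) (hmono (Fin.mk_le_mk.2 zero_le_one))
    fun x => √(∑ z, W x z)
  set f := fun x => w x / √(∑ z, W x z)
  have hE : energyW W f ≤ hL.eigenvalues (σ i₁) := dotProduct_normLap_mulVec hsym hd w ▸ hwLw
  have hmean : ∑ x, (∑ z, W x z) * f x = 0 := by
    rw [← hsw]
    refine sum_congr rfl fun x _ => ?_
    rw [← Real.mul_self_sqrt (hd x).le, mul_assoc,
      mul_div_cancel₀ _ (Real.sqrt_pos.2 (hd x)).ne']
  have hnorm : ∑ x, (∑ z, W x z) * f x ^ 2 = 1 := by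
    rw [← hww]
    refine sum_congr rfl fun x _ => ?_
    rw [div_pow, Real.sq_sqrt (hd x).le, mul_div_cancel₀ _ (hd x).ne', sq]
  have h4 := four_le_mul_sSup_Reff_mul_energyW hnn hconn hmean hnorm
  have hpos : 0 < (∑ x, ∑ y, W x y) * sSup {r | ∃ s t : Fin n, r = Reff W s t} := by
    by_contra h
    linarith [mul_nonpos_of_nonpos_of_nonneg (not_lt.1 h) (energyW_nonneg hnn f)]
  rw [div_le_iff₀ hpos, Function.comp_apply]
  linarith [mul_le_mul_of_nonneg_left hE hpos.le]
end
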